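/- Let p ≥ 2, let f : ℝ^d → ℝ be convex, differentiable, and L-smooth w.r.t. ‖·‖_p with minimizer x*, and let (x_t) be HASD iterates started at x_0 with ‖x_0 − x*‖_2 ≤ R. Suppose Ĝ satisfies 1 ≤ Ĝ ≤ 𝒢_t := (1/t) ∑_{i=0}^{t-1} ‖∇f(x_{i+1})‖_{p*}/‖∇f(x_{i+1})‖_2 for all t ∈ {1, …, T}. Then min_{t ∈ {1,…,T}} ‖∇f(x_t)‖_{p*}² ≤ 8748 L² R² / (Ĝ² T³); in particular, if T ≥ 21 L^{2/3} R^{2/3} / (Ĝ^{2/3} ε^{2/3}) for some ε > 0, then min_{t ∈ {1,…,T}} ‖∇f(x_t)‖_{p*} ≤ ε. -/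

import Mathlib

/-!
A steepest-descent step `x⁺` from `y` with respect to `‖·‖_p`, combined with `L`-smoothness, gives
`‖∇f(x⁺)‖_{p*}² ≤ 9L⟪∇f(x⁺), y - x⁺⟫` (the step length is exactly `‖∇f(y)‖_{p*}/(2L)`).
Fed into the estimate-sequence argument for `ψ_t`, this yields the potential inequality
`18L A_T f(x_T) + ∑_{t<T} A_{t+1} ‖∇f(x_{t+1})‖_{p*}² ≤ 18L ψ_T(v_T) ≤ 9L R² + 18L A_T f(x*)`,
so `∑_{t<T} A_{t+1} ‖∇f(x_{t+1})‖_{p*}² ≤ 9L R²`. The rule for `a_{t+1}` makes `√A` grow by at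
least `‖∇f(x_{t+1})‖_{p*} / (12 √L ‖∇f(x_{t+1})‖_2)` per step, hence `A_t ≥ Ĝ² t² / (144 L)`, and
`∑_{t ≤ T} t² ≥ T³/3` turns the weighted sum bound into the `T⁻³` rate for the smallest gradient.
-/

open scoped BigOperators
open scoped InnerProductSpace

/-- The `ℓ_p` "norm" on `ℝ^d` for a real exponent `p`. -/
noncomputable def pnorm (p : ℝ) {d : ℕ} (x : EuclideanSpace ℝ (Fin d)) : ℝ :=
  (∑ i, |x i| ^ p) ^ (1 / p)

/-- The dual exponent `p* = p/(p-1)`, so that `1/p + 1/p* = 1`. -/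
noncomputable def dualExp (p : ℝ) : ℝ := p / (p - 1)

section pnorm

variable {d : ℕ}

lemma pnorm_nonneg (p : ℝ) (x : EuclideanSpace ℝ (Fin d)) : 0 ≤ pnorm p x := by
  unfold pnorm; positivity

lemma pnorm_pos (p : ℝ) {x : EuclideanSpace ℝ (Fin d)} (hx : x ≠ 0) :
    0 < pnorm p x := by
  obtain ⟨i, hi⟩ : ∃ i, x i ≠ 0 := by
    by_contra! h
    exact hx (by ext i; exact h i)
  exact Real.rpow_pos_of_pos (Finset.sum_pos' (fun j _ => by positivity)
    ⟨i, Finset.mem_univ i, Real.rpow_pos_of_pos (abs_pos.2 hi) p⟩) _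

lemma pnorm_sub_comm (p : ℝ) (x y : EuclideanSpace ℝ (Fin d)) :
    pnorm p (x - y) = pnorm p (y - x) := by
  simp only [pnorm, PiLp.sub_apply, abs_sub_comm]

lemma pnorm_two (x : EuclideanSpace ℝ (Fin d)) : pnorm 2 x = ‖x‖ := by
  simp [pnorm, EuclideanSpace.norm_eq, Real.sqrt_eq_rpow]

lemma pnorm_zero {p : ℝ} (hp : 0 < p) : pnorm p (0 : EuclideanSpace ℝ (Fin d)) = 0 := by
  simp [pnorm, hp.ne']

lemma pnorm_smul {p : ℝ} (hp : p ≠ 0) (s : ℝ) (x : EuclideanSpace ℝ (Fin d)) :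
    pnorm p (s • x) = |s| * pnorm p x := by
  simp only [pnorm, PiLp.smul_apply, smul_eq_mul, abs_mul,
    Real.mul_rpow (abs_nonneg _) (abs_nonneg _), ← Finset.mul_sum]
  rw [Real.mul_rpow (by positivity) (by positivity), ← Real.rpow_mul (abs_nonneg _),
    mul_one_div_cancel hp, Real.rpow_one]

lemma pnorm_add_le {p : ℝ} (hp : 1 ≤ p) (x y : EuclideanSpace ℝ (Fin d)) :
    pnorm p (x + y) ≤ pnorm p x + pnorm p y := by
  simpa [pnorm] using Real.Lp_add_le Finset.univ (fun i => x i) (fun i => y i) hp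

lemma inner_le_pnorm_mul_pnorm {p q : ℝ} (hpq : p.HolderConjugate q)
    (x y : EuclideanSpace ℝ (Fin d)) : ⟪x, y⟫_ℝ ≤ pnorm q x * pnorm p y := by
  rw [mul_comm]
  simpa [PiLp.inner_apply, pnorm, mul_comm] using Real.inner_le_Lp_mul_Lq Finset.univ y x hpq

lemma exists_pnorm_le_one_inner_eq {p q : ℝ} (hpq : p.HolderConjugate q)
    (g : EuclideanSpace ℝ (Fin d)) :
    ∃ w : EuclideanSpace ℝ (Fin d), pnorm p w ≤ 1 ∧ ⟪g, w⟫_ℝ = pnorm q g := by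
  set S := ∑ i, |g i| ^ q
  rcases (show 0 ≤ S by positivity).eq_or_lt with hS | hS
  · refine ⟨0, by rw [pnorm_zero hpq.pos]; exact zero_le_one, ?_⟩
    rw [inner_zero_right, pnorm]
    change 0 = S ^ (1 / q)
    rw [← hS, Real.zero_rpow (one_div_pos.2 hpq.symm.pos).ne']
  have hq : 0 < q - 1 := sub_pos.2 hpq.symm.lt
  -- the equality case of Hölder: `w i ∝ sign (g i) |g i| ^ (q - 1)`
  set w : EuclideanSpace ℝ (Fin d) :=
    WithLp.toLp 2 fun i => (SignType.sign (g i) : ℝ) * |g i| ^ (q - 1)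
  have habs : ∀ i, |w i| = |g i| ^ (q - 1) := by
    intro i
    rcases lt_trichotomy (g i) 0 with h | h | h <;>
      simp [w, h, Real.zero_rpow hq.ne', Real.rpow_nonneg]
  have hw_p : ∑ i, |w i| ^ p = S := by
    refine Finset.sum_congr rfl fun i _ => ?_
    rw [habs, ← Real.rpow_mul (abs_nonneg _), hpq.symm.sub_one_mul_conj]
  have hw_g : ⟪g, w⟫_ℝ = S := by
    simp only [PiLp.inner_apply, w]
    refine Finset.sum_congr rfl fun i _ => ?_
    calc _ = |g i| ^ (q - 1) * (SignType.sign (g i) * g i) := by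
          simp only [RCLike.inner_apply, conj_trivial]; ring
      _ = |g i| ^ q := by
        rw [sign_mul_self, ← Real.rpow_add_one' (abs_nonneg _) (by linarith), sub_add_cancel]
  refine ⟨(S ^ (1 / p))⁻¹ • w, ?_, ?_⟩
  · rw [pnorm_smul hpq.ne_zero, pnorm, hw_p, abs_of_pos (by positivity),
      inv_mul_cancel₀ (by positivity)]
  · rw [inner_smul_right, hw_g, pnorm]
    change _ = S ^ (1 / q)
    rw [one_div q, ← hpq.one_sub_inv, Real.rpow_sub hS, Real.rpow_one, one_div, div_eq_inv_mul]

lemma holderConjugate_dualExp {p : ℝ} (hp : 1 < p) : p.HolderConjugate (dualExp p) :=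
  Real.HolderConjugate.conjExponent hp

end pnorm

section SteepestStep

variable {d : ℕ} {p q L : ℝ}

lemma steepest_step_eq (hpq : p.HolderConjugate q) (hL : 0 < L)
    {g y x' : EuclideanSpace ℝ (Fin d)}
    (hmin : ∀ z, ⟪g, x' - y⟫_ℝ + L * pnorm p (x' - y) ^ 2 ≤
      ⟪g, z - y⟫_ℝ + L * pnorm p (z - y) ^ 2) :
    pnorm q g = 2 * L * pnorm p (x' - y) ∧ ⟪g, y - x'⟫_ℝ = 2 * L * pnorm p (x' - y) ^ 2 := by
  set r := pnorm p (x' - y)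
  set s := pnorm q g / (2 * L)
  have hG : pnorm q g = 2 * L * s := by simp only [s]; field_simp
  have hs : 0 ≤ s := div_nonneg (pnorm_nonneg q g) (by positivity)
  obtain ⟨w, hw, hgw⟩ := exists_pnorm_le_one_inner_eq hpq g
  have hlower : L * r ^ 2 + L * s ^ 2 ≤ ⟪g, y - x'⟫_ℝ := by
    have htest := hmin (y - s • w)
    rw [show y - s • w - y = (-s) • w by module, inner_smul_right, pnorm_smul hpq.ne_zero,
      abs_neg, abs_of_nonneg hs, hgw, hG] at htest
    have hsw : (s * pnorm p w) ^ 2 ≤ s ^ 2 := by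
      rw [mul_pow]
      exact mul_le_of_le_one_right (sq_nonneg s) (pow_le_one₀ (pnorm_nonneg p w) hw)
    rw [← neg_sub, inner_neg_right]
    nlinarith [mul_le_mul_of_nonneg_left hsw hL.le]
  have hupper : ⟪g, y - x'⟫_ℝ ≤ 2 * L * s * r :=
    calc ⟪g, y - x'⟫_ℝ ≤ pnorm q g * pnorm p (y - x') := inner_le_pnorm_mul_pnorm hpq g _
      _ = 2 * L * s * r := by rw [hG, pnorm_sub_comm]
  have hrs : r = s := by
    have hsq : (r - s) ^ 2 ≤ 0 := by nlinarith
    exact sub_eq_zero.mp (pow_eq_zero_iff two_ne_zero |>.mp (le_antisymm hsq (sq_nonneg _)))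
  rw [← hrs] at hG hlower hupper
  exact ⟨hG, by linarith⟩

lemma sq_pnorm_le_of_steepest_step (hpq : p.HolderConjugate q) (hL : 0 < L)
    {gy gx y x' : EuclideanSpace ℝ (Fin d)}
    (hmin : ∀ z, ⟪gy, x' - y⟫_ℝ + L * pnorm p (x' - y) ^ 2 ≤
      ⟪gy, z - y⟫_ℝ + L * pnorm p (z - y) ^ 2)
    (hsmooth : pnorm q (gx - gy) ≤ L * pnorm p (x' - y)) :
    pnorm q gx ^ 2 ≤ 9 * L * ⟪gx, y - x'⟫_ℝ := by
  obtain ⟨hgy, hinner⟩ := steepest_step_eq hpq hL hmin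
  set r := pnorm p (x' - y)
  have hr : 0 ≤ r := pnorm_nonneg p _
  have hgx : pnorm q gx ≤ 3 * L * r :=
    calc pnorm q gx = pnorm q (gy + (gx - gy)) := by rw [add_sub_cancel]
      _ ≤ pnorm q gy + pnorm q (gx - gy) := pnorm_add_le hpq.symm.lt.le _ _
      _ ≤ 3 * L * r := by linarith
  have hcross : ⟪gx - gy, x' - y⟫_ℝ ≤ L * r ^ 2 :=
    calc ⟪gx - gy, x' - y⟫_ℝ ≤ pnorm q (gx - gy) * r := inner_le_pnorm_mul_pnorm hpq _ _
      _ ≤ L * r ^ 2 := by nlinarith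
  have hsplit : ⟪gx, y - x'⟫_ℝ = ⟪gy, y - x'⟫_ℝ - ⟪gx - gy, x' - y⟫_ℝ := by
    rw [← neg_sub x' y, inner_neg_right, inner_neg_right, inner_sub_left]
    ring
  have hdescent : L * r ^ 2 ≤ ⟪gx, y - x'⟫_ℝ := by linarith
  calc pnorm q gx ^ 2 ≤ (3 * L * r) ^ 2 := pow_le_pow_left₀ (pnorm_nonneg q gx) hgx 2
    _ = 9 * L * (L * r ^ 2) := by ring
    _ ≤ 9 * L * ⟪gx, y - x'⟫_ℝ := by gcongr

end SteepestStep

lemma ConvexOn.add_inner_gradient_le {E : Type*} [NormedAddCommGroup E] [InnerProductSpace ℝ E]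
    [CompleteSpace E] {f : E → ℝ} (hconv : ConvexOn ℝ Set.univ f) {x : E}
    (hf : DifferentiableAt ℝ f x) (z : E) : f x + ⟪gradient f x, z - x⟫_ℝ ≤ f z := by
  have hderiv : HasDerivAt (f ∘ AffineMap.lineMap (k := ℝ) x z) ⟪gradient f x, z - x⟫_ℝ 0 :=
    hf.hasGradientAt.hasFDerivAt.comp_hasDerivAt_of_eq (x := (0 : ℝ))
      AffineMap.hasDerivAt_lineMap (by simp)
  have := (hconv.comp_affineMap (AffineMap.lineMap x z)).le_slope_of_hasDerivAt
    (Set.mem_univ 0) (Set.mem_univ 1) zero_lt_one hderiv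
  simp only [slope_def_field, Function.comp_apply, AffineMap.lineMap_apply_zero,
    AffineMap.lineMap_apply_one, sub_zero, div_one] at this
  linarith

lemma eq_add_half_norm_sub_sq_of_forall_le {E : Type*} [NormedAddCommGroup E]
    [InnerProductSpace ℝ E] {ψ : E → ℝ} {u v : E} {c : ℝ}
    (hψ : ∀ z, ψ z = 1 / 2 * ‖z‖ ^ 2 + ⟪u, z⟫_ℝ + c) (hv : ∀ z, ψ v ≤ ψ z) (z : E) :
    ψ z = ψ v + 1 / 2 * ‖z - v‖ ^ 2 := by
  have hψ' : ∀ z, ψ z = 1 / 2 * ‖z + u‖ ^ 2 + (c - 1 / 2 * ‖u‖ ^ 2) := by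
    intro z
    rw [hψ, norm_add_sq_real, real_inner_comm]
    ring
  have hvu : v = -u := by
    have := hv (-u)
    rw [hψ', hψ', neg_add_cancel, norm_zero] at this
    rw [eq_neg_iff_add_eq_zero, ← norm_eq_zero]
    nlinarith [norm_nonneg (v + u)]
  rw [hψ', hψ', hvu, neg_add_cancel, sub_neg_eq_add, norm_zero]
  ring

lemma sum_range_succ_sq_ge (T : ℕ) :
    (T : ℝ) ^ 3 / 3 ≤ ∑ t ∈ Finset.range T, ((t : ℝ) + 1) ^ 2 := by
  induction T with
  | zero => simp
  | succ n ih =>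
    rw [Finset.sum_range_succ]
    push_cast
    nlinarith [(Nat.cast_nonneg n : (0 : ℝ) ≤ n)]

lemma div_le_two_mul_sqrt_mul_sub_sqrt {A A' N E K : ℝ} (hA : 0 ≤ A) (hAA' : A ≤ A')
    (hA' : 0 < A') (hE : 0 < E) (hN : 0 ≤ N) (hK : 0 ≤ K)
    (h : A' * N ^ 2 ≤ K * (A' - A) ^ 2 * E ^ 2) :
    N / E ≤ 2 * √K * (√A' - √A) := by
  have hsq : √A' * N ≤ √K * (A' - A) * E := by
    refine (pow_le_pow_iff_left₀ (by positivity)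
      (mul_nonneg (mul_nonneg (Real.sqrt_nonneg K) (sub_nonneg.2 hAA')) hE.le) two_ne_zero).1 ?_
    rw [mul_pow, mul_pow, mul_pow, Real.sq_sqrt hA'.le, Real.sq_sqrt hK]
    exact h
  have hdiff : A' - A ≤ 2 * √A' * (√A' - √A) := by
    nlinarith [Real.sq_sqrt hA, Real.sq_sqrt hA'.le, Real.sqrt_le_sqrt hAA', Real.sqrt_nonneg A]
  have hsA' : 0 < √A' := Real.sqrt_pos.2 hA'
  rw [div_le_iff₀ hE]
  refine le_of_mul_le_mul_left ?_ hsA'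
  calc √A' * N ≤ √K * (A' - A) * E := hsq
    _ ≤ √K * (2 * √A' * (√A' - √A)) * E := by gcongr
    _ = √A' * (2 * √K * (√A' - √A) * E) := by ring

lemma exists_lt_mul_cube_le {T : ℕ} (hT : 0 < T) {A N : ℕ → ℝ} {c B : ℝ} (hc : 0 ≤ c)
    (hN : ∀ t, 0 ≤ N t) (hA : ∀ t < T, c * ((t : ℝ) + 1) ^ 2 ≤ A t)
    (hB : ∑ t ∈ Finset.range T, A t * N t ≤ B) : ∃ t < T, c * T ^ 3 * N t ≤ 3 * B := by
  obtain ⟨i, hi, hmin⟩ := Finset.exists_min_image (Finset.range T) N ⟨0, Finset.mem_range.2 hT⟩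
  refine ⟨i, Finset.mem_range.1 hi, ?_⟩
  have : c * (T ^ 3 / 3) * N i ≤ B :=
    calc c * (T ^ 3 / 3) * N i
        ≤ c * (∑ t ∈ Finset.range T, ((t : ℝ) + 1) ^ 2) * N i := by
          gcongr
          · exact hN i
          · exact sum_range_succ_sq_ge T
      _ = ∑ t ∈ Finset.range T, c * ((t : ℝ) + 1) ^ 2 * N i := by
          rw [Finset.mul_sum, Finset.sum_mul]
      _ ≤ ∑ t ∈ Finset.range T, A t * N t := by
          refine Finset.sum_le_sum fun t ht => ?_
          exact mul_le_mul (hA t (Finset.mem_range.1 ht)) (hmin t ht) (hN i)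
            ((mul_nonneg hc (sq_nonneg _)).trans (hA t (Finset.mem_range.1 ht)))
      _ ≤ B := hB
  linarith

lemma le_of_sq_le_div_cube {N L R G ε T : ℝ} (hL : 0 ≤ L) (hR : 0 ≤ R) (hG : 0 < G)
    (hε : 0 < ε) (hT0 : 0 < T) (hN : N ^ 2 ≤ 8748 * L ^ 2 * R ^ 2 / (G ^ 2 * T ^ 3))
    (hT : 21 * L ^ ((2 : ℝ) / 3) * R ^ ((2 : ℝ) / 3) / (G ^ ((2 : ℝ) / 3) * ε ^ ((2 : ℝ) / 3)) ≤
      T) :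
    N ≤ ε := by
  have hcube : ∀ x : ℝ, 0 ≤ x → (x ^ ((2 : ℝ) / 3)) ^ 3 = x ^ 2 := fun x hx => by
    rw [← Real.rpow_natCast, ← Real.rpow_mul hx]
    norm_num
  have hT3 : 9261 * L ^ 2 * R ^ 2 / (G ^ 2 * ε ^ 2) ≤ T ^ 3 := by
    refine le_of_eq_of_le ?_ (pow_le_pow_left₀ (by positivity) hT 3)
    rw [div_pow, mul_pow, mul_pow, mul_pow, hcube L hL, hcube R hR, hcube G hG.le, hcube ε hε.le]
    norm_num
  rw [div_le_iff₀ (by positivity)] at hT3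
  have hε2 : 8748 * L ^ 2 * R ^ 2 / (G ^ 2 * T ^ 3) ≤ ε ^ 2 := by
    rw [div_le_iff₀ (by positivity)]
    nlinarith [mul_nonneg (sq_nonneg L) (sq_nonneg R)]
  exact (abs_le_of_sq_le_sq' (hN.trans hε2) hε.le).2

/-- The iterates of the Hyper-Accelerated Steepest Descent (HASD) method for
`f : ℝ^d → ℝ` differentiable, smoothness constant `L > 0`, started at `x0`. -/
structure HASD (d : ℕ) (p L : ℝ) (f : EuclideanSpace ℝ (Fin d) → ℝ)
    (x0 : EuclideanSpace ℝ (Fin d)) where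
  x : ℕ → EuclideanSpace ℝ (Fin d)
  y : ℕ → EuclideanSpace ℝ (Fin d)
  v : ℕ → EuclideanSpace ℝ (Fin d)
  a : ℕ → ℝ
  A : ℕ → ℝ
  ρ : ℕ → ℝ
  ψ : ℕ → EuclideanSpace ℝ (Fin d) → ℝ
  x_zero : x 0 = x0
  A_zero : A 0 = 0
  ψ_zero : ∀ z, ψ 0 z = (1 / 2) * pnorm 2 (z - x0) ^ 2
  /-- `v t` minimizes `ψ t` over `ℝ^d`. -/
  v_min : ∀ t z, ψ t (v t) ≤ ψ t z
  grad_ne : ∀ t : ℕ, gradient f (x (t + 1)) ≠ 0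
  ρ_pos : ∀ t : ℕ, 0 < ρ t
  ρ_lb : ∀ t : ℕ, (1 / 2) * (pnorm 2 (gradient f (x (t + 1))) ^ 2 /
      pnorm (dualExp p) (gradient f (x (t + 1))) ^ 2) ≤ ρ t
  ρ_ub : ∀ t : ℕ, ρ t ≤ 2 * (pnorm 2 (gradient f (x (t + 1))) ^ 2 /
      pnorm (dualExp p) (gradient f (x (t + 1))) ^ 2)
  a_pos : ∀ t : ℕ, 0 < a (t + 1)
  a_eq : ∀ t : ℕ, a (t + 1) ^ 2 = (A t + a (t + 1)) / (18 * L * ρ t)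
  A_succ : ∀ t : ℕ, A (t + 1) = A t + a (t + 1)
  y_def : ∀ t : ℕ, y t = (1 - a (t + 1) / A (t + 1)) • x t + (a (t + 1) / A (t + 1)) • v t
  /-- `x (t+1)` minimizes `z ↦ ⟪∇f(y t), z - y t⟫ + L ‖z - y t‖_p²` over `ℝ^d`. -/
  x_min : ∀ (t : ℕ) (z : EuclideanSpace ℝ (Fin d)),
      ⟪gradient f (y t), x (t + 1) - y t⟫_ℝ + L * pnorm p (x (t + 1) - y t) ^ 2 ≤
      ⟪gradient f (y t), z - y t⟫_ℝ + L * pnorm p (z - y t) ^ 2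
  ψ_succ : ∀ (t : ℕ) (z : EuclideanSpace ℝ (Fin d)),
      ψ (t + 1) z = ψ t z + a (t + 1) * (f (x (t + 1)) + ⟪gradient f (x (t + 1)), z - x (t + 1)⟫_ℝ)

namespace HASD

variable {d : ℕ} {p L : ℝ} {f : EuclideanSpace ℝ (Fin d) → ℝ} {x0 : EuclideanSpace ℝ (Fin d)}
  (h : HASD d p L f x0)

lemma A_nonneg (t : ℕ) : 0 ≤ h.A t := by
  induction t with
  | zero => exact h.A_zero.ge
  | succ t ih => rw [h.A_succ]; linarith [h.a_pos t]

lemma A_succ_pos (t : ℕ) : 0 < h.A (t + 1) := by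
  rw [h.A_succ]; linarith [h.A_nonneg t, h.a_pos t]

lemma exists_ψ_eq (n : ℕ) : ∃ u c, ∀ z, h.ψ n z = 1 / 2 * ‖z‖ ^ 2 + ⟪u, z⟫_ℝ + c := by
  induction n with
  | zero =>
    refine ⟨-x0, 1 / 2 * ‖x0‖ ^ 2, fun z => ?_⟩
    rw [h.ψ_zero, pnorm_two, norm_sub_sq_real, inner_neg_left, real_inner_comm]
    ring
  | succ n ih =>
    obtain ⟨u, c, hu⟩ := ih
    set g := gradient f (h.x (n + 1))
    refine ⟨u + h.a (n + 1) • g, c + h.a (n + 1) * (f (h.x (n + 1)) - ⟪g, h.x (n + 1)⟫_ℝ),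
      fun z => ?_⟩
    rw [h.ψ_succ, hu, inner_add_left, real_inner_smul_left, inner_sub_right]
    ring

lemma ψ_eq_add_half_norm_sub_sq (n : ℕ) (z : EuclideanSpace ℝ (Fin d)) :
    h.ψ n z = h.ψ n (h.v n) + 1 / 2 * ‖z - h.v n‖ ^ 2 := by
  obtain ⟨u, c, hu⟩ := h.exists_ψ_eq n
  exact eq_add_half_norm_sub_sq_of_forall_le hu (h.v_min n) z

lemma A_succ_mul_inner_y_sub (n : ℕ) (g : EuclideanSpace ℝ (Fin d)) :
    h.A (n + 1) * ⟪g, h.y n - h.x (n + 1)⟫_ℝ =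
      h.A n * ⟪g, h.x n - h.x (n + 1)⟫_ℝ + h.a (n + 1) * ⟪g, h.v n - h.x (n + 1)⟫_ℝ := by
  have hA : h.A n + h.a (n + 1) ≠ 0 := by rw [← h.A_succ]; exact (h.A_succ_pos n).ne'
  rw [h.y_def, inner_sub_right, inner_sub_right, inner_sub_right, inner_add_right,
    real_inner_smul_right, real_inner_smul_right, h.A_succ n]
  field_simp
  ring

lemma A_succ_eq_mul_ρ_mul_a_sq (hL : 0 < L) (t : ℕ) :
    h.A (t + 1) = 18 * L * h.ρ t * h.a (t + 1) ^ 2 := by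
  have hρ := h.ρ_pos t
  rw [h.a_eq, h.A_succ]
  field_simp

lemma a_sq_mul_sq_le (hL : 0 < L) (t : ℕ) :
    9 * L * h.a (t + 1) ^ 2 * pnorm 2 (gradient f (h.x (t + 1))) ^ 2 ≤
      h.A (t + 1) * pnorm (dualExp p) (gradient f (h.x (t + 1))) ^ 2 := by
  set g := gradient f (h.x (t + 1))
  have hN : 0 < pnorm (dualExp p) g ^ 2 := pow_pos (pnorm_pos _ (h.grad_ne t)) 2
  have hρ : pnorm 2 g ^ 2 ≤ 2 * h.ρ t * pnorm (dualExp p) g ^ 2 := by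
    rw [← div_le_iff₀ hN]
    linarith [h.ρ_lb t]
  rw [h.A_succ_eq_mul_ρ_mul_a_sq hL t]
  nlinarith [mul_le_mul_of_nonneg_left hρ (by positivity : 0 ≤ 9 * L * h.a (t + 1) ^ 2)]

lemma A_mul_sq_le (hL : 0 < L) (t : ℕ) :
    h.A (t + 1) * pnorm (dualExp p) (gradient f (h.x (t + 1))) ^ 2 ≤
      36 * L * h.a (t + 1) ^ 2 * pnorm 2 (gradient f (h.x (t + 1))) ^ 2 := by
  set g := gradient f (h.x (t + 1))
  have hN : 0 < pnorm (dualExp p) g ^ 2 := pow_pos (pnorm_pos _ (h.grad_ne t)) 2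
  have hρ : h.ρ t * pnorm (dualExp p) g ^ 2 ≤ 2 * pnorm 2 g ^ 2 := by
    rw [← le_div_iff₀ hN, mul_div_assoc]
    exact h.ρ_ub t
  rw [h.A_succ_eq_mul_ρ_mul_a_sq hL t]
  nlinarith [mul_le_mul_of_nonneg_left hρ (by positivity : 0 ≤ 18 * L * h.a (t + 1) ^ 2)]

lemma sq_pnorm_grad_le (hp : 1 < p) (hL : 0 < L)
    (hsmooth : ∀ x y : EuclideanSpace ℝ (Fin d),
      pnorm (dualExp p) (gradient f y - gradient f x) ≤ L * pnorm p (y - x)) (t : ℕ) :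
    pnorm (dualExp p) (gradient f (h.x (t + 1))) ^ 2 ≤
      9 * L * ⟪gradient f (h.x (t + 1)), h.y t - h.x (t + 1)⟫_ℝ :=
  sq_pnorm_le_of_steepest_step (holderConjugate_dualExp hp) hL (h.x_min t) (hsmooth _ _)

lemma ψ_le (hconv : ConvexOn ℝ Set.univ f) (hf : Differentiable ℝ f) (n : ℕ)
    (z : EuclideanSpace ℝ (Fin d)) : h.ψ n z ≤ 1 / 2 * pnorm 2 (z - x0) ^ 2 + h.A n * f z := by
  induction n with
  | zero => rw [h.ψ_zero, h.A_zero, zero_mul, add_zero]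
  | succ n ih =>
    rw [h.ψ_succ, h.A_succ]
    nlinarith [mul_le_mul_of_nonneg_left (hconv.add_inner_gradient_le (hf (h.x (n + 1))) z)
      (h.a_pos n).le]

lemma potential_le (hL : 0 < L) (hconv : ConvexOn ℝ Set.univ f) (hf : Differentiable ℝ f)
    (hstep : ∀ t, pnorm (dualExp p) (gradient f (h.x (t + 1))) ^ 2 ≤
      9 * L * ⟪gradient f (h.x (t + 1)), h.y t - h.x (t + 1)⟫_ℝ) (n : ℕ) :
    18 * L * (h.A n * f (h.x n)) +
      ∑ t ∈ Finset.range n, h.A (t + 1) * pnorm (dualExp p) (gradient f (h.x (t + 1))) ^ 2 ≤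
      18 * L * h.ψ n (h.v n) := by
  induction n with
  | zero =>
    simp only [h.A_zero, h.ψ_zero, zero_mul, mul_zero, Finset.range_zero, Finset.sum_empty,
      add_zero]
    positivity
  | succ n ih =>
    set g := gradient f (h.x (n + 1))
    set a := h.a (n + 1)
    set δ := h.v (n + 1) - h.v n
    have hψ : h.ψ (n + 1) (h.v (n + 1)) = h.ψ n (h.v n) + 1 / 2 * ‖δ‖ ^ 2 +
        a * (f (h.x (n + 1)) + ⟪g, h.v n - h.x (n + 1)⟫_ℝ + ⟪g, δ⟫_ℝ) := by
      rw [h.ψ_succ, h.ψ_eq_add_half_norm_sub_sq n, add_assoc (f _), ← inner_add_right,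
        sub_add_sub_cancel']
    -- completing the square `‖δ + a g‖² ≥ 0`
    have hyoung : -(a ^ 2 * ‖g‖ ^ 2) ≤ 2 * a * ⟪g, δ⟫_ℝ + ‖δ‖ ^ 2 := by
      have := norm_add_sq_real δ (a • g)
      rw [norm_smul, real_inner_smul_right, real_inner_comm, Real.norm_eq_abs, mul_pow,
        sq_abs] at this
      nlinarith [sq_nonneg ‖δ + a • g‖]
    have hcvx : h.A n * (f (h.x (n + 1)) + ⟪g, h.x n - h.x (n + 1)⟫_ℝ) ≤ h.A n * f (h.x n) :=
      mul_le_mul_of_nonneg_left (hconv.add_inner_gradient_le (hf _) _) (h.A_nonneg n)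
    have hy := h.A_succ_mul_inner_y_sub n g
    have hN := mul_le_mul_of_nonneg_left (hstep n) (h.A_succ_pos n).le
    have ha := h.a_sq_mul_sq_le hL n
    rw [pnorm_two] at ha
    rw [h.A_succ] at hy hN ha
    rw [Finset.sum_range_succ, hψ, h.A_succ]
    nlinarith [mul_le_mul_of_nonneg_left hcvx (by positivity : (0 : ℝ) ≤ 18 * L),
      mul_le_mul_of_nonneg_left hyoung (by positivity : (0 : ℝ) ≤ 9 * L)]

lemma sum_A_mul_sq_le (hL : 0 < L) (hconv : ConvexOn ℝ Set.univ f) (hf : Differentiable ℝ f)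
    (hstep : ∀ t, pnorm (dualExp p) (gradient f (h.x (t + 1))) ^ 2 ≤
      9 * L * ⟪gradient f (h.x (t + 1)), h.y t - h.x (t + 1)⟫_ℝ)
    {xstar : EuclideanSpace ℝ (Fin d)} (hxstar : ∀ z, f xstar ≤ f z) (n : ℕ) :
    ∑ t ∈ Finset.range n, h.A (t + 1) * pnorm (dualExp p) (gradient f (h.x (t + 1))) ^ 2 ≤
      9 * L * pnorm 2 (x0 - xstar) ^ 2 := by
  have hpot := h.potential_le hL hconv hf hstep n
  have hψ := (h.v_min n xstar).trans (h.ψ_le hconv hf n xstar)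
  have hfx := mul_le_mul_of_nonneg_left (hxstar (h.x n)) (h.A_nonneg n)
  rw [pnorm_sub_comm] at hψ
  nlinarith

lemma sq_sum_div_le (hL : 0 < L) (n : ℕ) :
    (∑ i ∈ Finset.range n, pnorm (dualExp p) (gradient f (h.x (i + 1))) /
      pnorm 2 (gradient f (h.x (i + 1)))) ^ 2 ≤ 144 * L * h.A n := by
  have hterm : ∀ i, pnorm (dualExp p) (gradient f (h.x (i + 1))) /
      pnorm 2 (gradient f (h.x (i + 1))) ≤ 2 * √(36 * L) * (√(h.A (i + 1)) - √(h.A i)) := by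
    intro i
    refine div_le_two_mul_sqrt_mul_sub_sqrt (h.A_nonneg i) ?_ (h.A_succ_pos i)
      (pnorm_pos _ (h.grad_ne i)) (pnorm_nonneg _ _) (by positivity) ?_
    · rw [h.A_succ]; linarith [h.a_pos i]
    · rw [h.A_succ i, add_sub_cancel_left, ← h.A_succ i]
      linarith [h.A_mul_sq_le hL i]
  have hsum := Finset.sum_le_sum fun i (_ : i ∈ Finset.range n) => hterm i
  rw [← Finset.mul_sum, Finset.sum_range_sub (fun i => √(h.A i)), h.A_zero, Real.sqrt_zero,
    sub_zero] at hsum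
  calc _ ≤ (2 * √(36 * L) * √(h.A n)) ^ 2 :=
        pow_le_pow_left₀
          (Finset.sum_nonneg fun i _ => div_nonneg (pnorm_nonneg _ _) (pnorm_nonneg _ _)) hsum 2
    _ = 144 * L * h.A n := by
        rw [mul_pow, mul_pow, Real.sq_sqrt (by positivity), Real.sq_sqrt (h.A_nonneg n)]
        ring

end HASD

theorem stmt10 {d : ℕ} (p L : ℝ) (hp : 2 ≤ p) (hL : 0 < L)
    (f : EuclideanSpace ℝ (Fin d) → ℝ) (hconv : ConvexOn ℝ Set.univ f)
    (hf : Differentiable ℝ f)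
    (hsmooth : ∀ x y : EuclideanSpace ℝ (Fin d),
      pnorm (dualExp p) (gradient f y - gradient f x) ≤ L * pnorm p (y - x))
    (xstar : EuclideanSpace ℝ (Fin d)) (hxstar : ∀ z, f xstar ≤ f z)
    (x0 : EuclideanSpace ℝ (Fin d)) (h : HASD d p L f x0)
    (R : ℝ) (hR : pnorm 2 (x0 - xstar) ≤ R)
    (Ghat : ℝ) (hGhat : 1 ≤ Ghat)
    (T : ℕ) (hT : 1 ≤ T)
    (hG : ∀ t : ℕ, 1 ≤ t → t ≤ T →
      Ghat ≤ (1 / (t : ℝ)) * ∑ i ∈ Finset.range t,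
        pnorm (dualExp p) (gradient f (h.x (i + 1))) / pnorm 2 (gradient f (h.x (i + 1)))) :
    (∃ t : ℕ, 1 ≤ t ∧ t ≤ T ∧
      pnorm (dualExp p) (gradient f (h.x t)) ^ 2 ≤
        8748 * L ^ 2 * R ^ 2 / (Ghat ^ 2 * (T : ℝ) ^ 3)) ∧
    (∀ ε : ℝ, 0 < ε →
      21 * L ^ ((2 : ℝ) / 3) * R ^ ((2 : ℝ) / 3) / (Ghat ^ ((2 : ℝ) / 3) * ε ^ ((2 : ℝ) / 3)) ≤
        (T : ℝ) →
      ∃ t : ℕ, 1 ≤ t ∧ t ≤ T ∧ pnorm (dualExp p) (gradient f (h.x t)) ≤ ε) := by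
  have hGhat0 : 0 < Ghat := by linarith
  have hR0 : 0 ≤ R := (pnorm_nonneg 2 _).trans hR
  have hstep := h.sq_pnorm_grad_le (by linarith) hL hsmooth
  have hgrowth : ∀ t < T, Ghat ^ 2 * ((t : ℝ) + 1) ^ 2 ≤ 144 * L * h.A (t + 1) := by
    intro t ht
    have havg := hG (t + 1) (by omega) ht
    rw [Nat.cast_add_one, one_div, inv_mul_eq_div, le_div_iff₀ (by positivity)] at havg
    rw [← mul_pow]
    exact (pow_le_pow_left₀ (by positivity) havg 2).trans (h.sq_sum_div_le hL (t + 1))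
  have hsum : ∑ t ∈ Finset.range T, 144 * L * h.A (t + 1) *
      pnorm (dualExp p) (gradient f (h.x (t + 1))) ^ 2 ≤ 144 * L * (9 * L * R ^ 2) := by
    simp_rw [mul_assoc (144 * L)]
    rw [← Finset.mul_sum]
    gcongr
    exact (h.sum_A_mul_sq_le hL hconv hf hstep hxstar T).trans
      (by gcongr; exact pnorm_nonneg 2 _)
  obtain ⟨t, htT, hweighted⟩ :=
    exists_lt_mul_cube_le (by omega) (sq_nonneg Ghat) (fun t => sq_nonneg _) hgrowth hsum
  have hbound : pnorm (dualExp p) (gradient f (h.x (t + 1))) ^ 2 ≤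
      8748 * L ^ 2 * R ^ 2 / (Ghat ^ 2 * (T : ℝ) ^ 3) := by
    rw [le_div_iff₀ (by positivity)]
    nlinarith [mul_nonneg (sq_nonneg L) (sq_nonneg R)]
  refine ⟨⟨t + 1, by omega, htT, hbound⟩, fun ε hε hTε => ⟨t + 1, by omega, htT, ?_⟩⟩
  exact le_of_sq_le_div_cube hL.le hR0 hGhat0 hε (by exact_mod_cast hT) hbound hTε
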